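/- arXiv:1311.2232 — 2 statements merged into one kernel-verified Lean document; each statement's English description precedes it below -/
import Mathlib

section
/- Let Γ be a finite simplicial graph with vertex set V such that Z = {v ∈ V : st(v) = V} is non-empty, and let A = A(Γ). Two partial conjugations π_{a,K} and π_{b,L} commute in Aut(A) if and only if one of the following holds: (1) a = b or a and b are adjacent; (4) a ≠ b, a and b are non-adjacent, and either {a} ∪ K ⊊ L or {b} ∪ L ⊊ K; (5) a ≠ b, a and b are non-adjacent, and ({a} ∪ K) ∩ ({b} ∪ L) = ∅. -/
open SimpleGraph

/-- The star of a vertex: the vertex together with its neighbours. -/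
def Gstar {V : Type} (Γ : SimpleGraph V) (a : V) : Set V := insert a (Γ.neighborSet a)

/-- The set of vertices whose star is the whole vertex set. -/
def Zset {V : Type} (Γ : SimpleGraph V) : Set V := {v | Gstar Γ v = Set.univ}

/-- `K` is (the vertex set of) a connected component of the full subgraph of `Γ`
induced on the vertex set `S`. -/
def IsCompOf {V : Type} (Γ : SimpleGraph V) (S K : Set V) : Prop :=
  ∃ c : (Γ.induce S).ConnectedComponent, K = Subtype.val '' c.supp

/-- The defining relators of the right-angled Artin group of `Γ`. -/
def raagRels {V : Type} (Γ : SimpleGraph V) : Set (FreeGroup V) :=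
  {r | ∃ a b : V, Γ.Adj a b ∧
    r = FreeGroup.of a * FreeGroup.of b * (FreeGroup.of a)⁻¹ * (FreeGroup.of b)⁻¹}

/-- The right-angled Artin group `A(Γ)`. -/
abbrev RAAG {V : Type} (Γ : SimpleGraph V) : Type := PresentedGroup (raagRels Γ)

/-- The generator of `A(Γ)` corresponding to a vertex `v`. -/
def raagGen {V : Type} (Γ : SimpleGraph V) (v : V) : RAAG Γ := PresentedGroup.of v

/-- The pure symmetric automorphism group: automorphisms sending each standard
generator to a conjugate of itself. -/
def PSA {V : Type} (Γ : SimpleGraph V) : Subgroup (MulAut (RAAG Γ)) where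
  carrier := {φ | ∀ v : V, IsConj (raagGen Γ v) (φ (raagGen Γ v))}
  one_mem' := fun v => IsConj.refl _
  mul_mem' := by
    intro φ ψ hφ hψ v
    have h2 : IsConj (φ (raagGen Γ v)) (φ (ψ (raagGen Γ v))) :=
      φ.toMonoidHom.map_isConj (hψ v)
    simpa [MulAut.mul_apply] using (hφ v).trans h2
  inv_mem' := by
    intro φ hφ v
    have h := (φ⁻¹ : MulAut (RAAG _)).toMonoidHom.map_isConj (hφ v)
    simp only [MulEquiv.toMonoidHom_eq_coe, MonoidHom.coe_coe, MulAut.inv_def,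
      MulEquiv.symm_apply_apply] at h
    exact h.symm

/-- `φ` is the partial conjugation `π_{a,K}`. -/
def IsPartialConj {V : Type} (Γ : SimpleGraph V) (a : V) (K : Set V)
    (φ : MulAut (RAAG Γ)) : Prop :=
  IsCompOf Γ (Gstar Γ a)ᶜ K ∧
  (∀ v ∈ K, φ (raagGen Γ v) = (raagGen Γ a)⁻¹ * raagGen Γ v * raagGen Γ a) ∧
  (∀ v ∉ K, φ (raagGen Γ v) = raagGen Γ v)

/-- Combinatorial data (acting letter, domain) of the partial conjugations. -/
def PCSet {V : Type} (Γ : SimpleGraph V) : Set (V × Set V) :=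
  {p | IsCompOf Γ (Gstar Γ p.1)ᶜ p.2}

/-- A non-trivial admissible partition (for p-sets). -/
def IsAdmissiblePartition {V : Type} (Q₁ Q₂ : Set (V × Set V)) : Prop :=
  Disjoint Q₁ Q₂ ∧ Q₁.Nonempty ∧ Q₂.Nonempty ∧
    ∀ p ∈ Q₁, ∀ q ∈ Q₂, p.1 ∈ q.2 ∧ q.1 ∈ p.2

/-- A p-set of partial conjugations. -/
def IsPSet {V : Type} (Γ : SimpleGraph V) (Q : Set (V × Set V)) : Prop :=
  Q ⊆ PCSet Γ ∧
  (∀ a : V, {p ∈ Q | p.1 = a}.Subsingleton) ∧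
  ∃ Q₁ Q₂ : Set (V × Set V), Q₁ ∪ Q₂ = Q ∧ IsAdmissiblePartition Q₁ Q₂

/-- A non-trivial admissible partition (for δ-p-sets). -/
def IsDeltaAdmissiblePartition {V : Type} (Q₁ Q₂ : Set (V × Set V)) : Prop :=
  Disjoint Q₁ Q₂ ∧ Q₁.Nonempty ∧ Q₂.Nonempty ∧
    ∀ p ∈ Q₁, ∀ q ∈ Q₂, p.1 ∈ q.2 ∨ q.1 ∈ p.2 ∨ p.2 = q.2

/-- A δ-p-set of partial conjugations. -/
def IsDeltaPSet {V : Type} (Γ : SimpleGraph V) (Q : Set (V × Set V)) : Prop :=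
  Q ⊆ PCSet Γ ∧
  (∀ a : V, a ∉ Zset Γ →
    ({p ∈ Q | p.1 = a}.ncard = 0 ∨ {p ∈ Q | p.1 = a}.ncard = 2)) ∧
  ∃ Q₁ Q₂ : Set (V × Set V), Q₁ ∪ Q₂ = Q ∧ IsDeltaAdmissiblePartition Q₁ Q₂

/-- `Γ` has a separating intersection of links. -/
def HasSIL {V : Type} (Γ : SimpleGraph V) : Prop :=
  ∃ a b : V, a ≠ b ∧ ¬Γ.Adj a b ∧
    ∃ M : Set V, IsCompOf Γ (Γ.neighborSet a ∩ Γ.neighborSet b)ᶜ M ∧ a ∉ M ∧ b ∉ M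

/-- The full subgraph spanned by `U` is dominating. -/
def Dominating {V : Type} (Γ : SimpleGraph V) (U : Set V) : Prop :=
  ∀ v : V, v ∈ U ∨ ∃ u ∈ U, Γ.Adj v u

/-- The full subgraph spanned by `U` is disconnected or non-dominating. -/
def Missing {V : Type} (Γ : SimpleGraph V) (U : Set V) : Prop :=
  ¬(Γ.induce U).Connected ∨ ¬Dominating Γ U

/-!
Both automorphisms are determined by their values on the generators. In cases (1), (4) and (5)
these agree generator by generator: conjugations by equal or adjacent letters commute, and nested
or disjoint supports keep the two conjugations from interfering. Conversely, for non-adjacent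
`a ≠ b`, `a ∈ L` forces `K ⊆ L`, and `a ∉ L`, `b ∉ K` force `K ∩ L = ∅`: a generator `v`
violating this yields a relation in `A(Γ)` that fails under a homomorphism to `S₃` sending `a`
and `b` to non-commuting transpositions. The inclusion `{a} ∪ K ⊂ L` is strict because the
component `L` contains a neighbour of `a`, which `{a} ∪ K` does not.
-/

section Graph

variable {V : Type} {Γ : SimpleGraph V}

lemma mem_compl_gstar {a v : V} : v ∈ (Gstar Γ a)ᶜ ↔ v ≠ a ∧ ¬Γ.Adj a v := by
  simp [Gstar, not_or]

namespace IsCompOf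

variable {S K : Set V}

lemma subset (hK : IsCompOf Γ S K) : K ⊆ S := by
  obtain ⟨c, rfl⟩ := hK
  rintro _ ⟨u, -, rfl⟩
  exact u.2

lemma nonempty (hK : IsCompOf Γ S K) : K.Nonempty := by
  obtain ⟨c, rfl⟩ := hK
  obtain ⟨u, rfl⟩ := c.exists_rep
  exact ⟨u, u, rfl, rfl⟩

lemma exists_adj (hK : IsCompOf Γ S K) {u w : V} (hu : u ∈ K) (hw : w ∈ K) (huw : u ≠ w) :
    ∃ x ∈ K, Γ.Adj u x := by
  obtain ⟨c, rfl⟩ := hK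
  obtain ⟨u, hu, rfl⟩ := hu
  obtain ⟨w, hw, rfl⟩ := hw
  obtain ⟨p⟩ := ConnectedComponent.exact (hu.trans hw.symm)
  have hp : ¬p.Nil := Walk.not_nil_of_ne fun h => huw (congrArg Subtype.val h)
  refine ⟨p.snd, ⟨p.snd, ?_, rfl⟩, Walk.adj_snd hp⟩
  rw [ConnectedComponent.mem_supp_iff, ← hu]
  exact ConnectedComponent.sound (Walk.adj_snd hp).reachable.symm

lemma not_adj_of_mem {a v : V} (hK : IsCompOf Γ (Gstar Γ a)ᶜ K) (hv : v ∈ K) : ¬Γ.Adj a v :=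
  (mem_compl_gstar.1 (hK.subset hv)).2

lemma self_notMem {a : V} (hK : IsCompOf Γ (Gstar Γ a)ᶜ K) : a ∉ K :=
  fun ha => (mem_compl_gstar.1 (hK.subset ha)).1 rfl

lemma insert_ssubset {a : V} {L : Set V} (hK : IsCompOf Γ (Gstar Γ a)ᶜ K)
    (hL : IsCompOf Γ S L) (haL : a ∈ L) (hKL : K ⊆ L) : insert a K ⊂ L := by
  refine (Set.ssubset_iff_of_subset (Set.insert_subset haL hKL)).2 ?_
  obtain ⟨k, hk⟩ := hK.nonempty
  obtain ⟨x, hxL, hax⟩ := hL.exists_adj haL (hKL hk) fun hak => hK.self_notMem (hak ▸ hk)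
  refine ⟨x, hxL, ?_⟩
  rintro (rfl | hxK)
  exacts [Γ.loopless.irrefl _ hax, hK.not_adj_of_mem hxK hax]

end IsCompOf

end Graph

section RAAG

variable {V : Type} {Γ : SimpleGraph V}

lemma raagGen_commute {u w : V} (h : Γ.Adj u w) : Commute (raagGen Γ u) (raagGen Γ w) := by
  have hrel : raagGen Γ u * raagGen Γ w * (raagGen Γ u)⁻¹ * (raagGen Γ w)⁻¹ = 1 := by
    have := PresentedGroup.one_of_mem (show _ ∈ raagRels Γ from ⟨u, w, h, rfl⟩)
    simp only [map_mul, map_inv] at this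
    exact this
  simpa [Commute, SemiconjBy, mul_assoc] using congrArg (· * (raagGen Γ w * raagGen Γ u)) hrel

def raagLift {G : Type*} [Group G] (f : V → G)
    (hf : ∀ u w, Γ.Adj u w → Commute (f u) (f w)) : RAAG Γ →* G :=
  PresentedGroup.toGroup (rels := raagRels Γ) (f := f) <| by
    rintro _ ⟨u, w, huw, rfl⟩
    simp [(hf u w huw).eq]

@[simp]
lemma raagLift_gen {G : Type*} [Group G] (f : V → G)
    (hf : ∀ u w, Γ.Adj u w → Commute (f u) (f w)) (v : V) :
    raagLift f hf (raagGen Γ v) = f v :=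
  PresentedGroup.toGroup.of _

lemma exists_hom_of_forall_not_adj {G : Type*} [Group G] (x y : G) {S T : Set V}
    (hST : ∀ u ∈ S, ∀ w ∈ T, ¬Γ.Adj u w) :
    ∃ F : RAAG Γ →* G, (∀ u ∈ S, F (raagGen Γ u) = x) ∧
      ∀ w ∈ T, w ∉ S → F (raagGen Γ w) = y := by
  classical
  let f : V → G := fun u => if u ∈ S then x else if u ∈ T then y else 1
  have hf : ∀ u w, Γ.Adj u w → Commute (f u) (f w) := by
    intro u w huw
    by_cases huS : u ∈ S <;> by_cases hwS : w ∈ S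
    · simp [f, huS, hwS]
    · by_cases hwT : w ∈ T
      · exact absurd huw (hST u huS w hwT)
      · simp [f, hwS, hwT]
    · by_cases huT : u ∈ T
      · exact absurd huw.symm (hST w hwS u huT)
      · simp [f, huS, huT]
    · simp only [f, huS, hwS, if_false]
      split_ifs <;> simp
  exact ⟨raagLift f hf, fun u hu => by simp [f, hu], fun w hw hwS => by simp [f, hw, hwS]⟩

lemma MulAut.commute_iff_forall_raagGen {φ ψ : MulAut (RAAG Γ)} :
    Commute φ ψ ↔ ∀ v, φ (ψ (raagGen Γ v)) = ψ (φ (raagGen Γ v)) := by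
  refine ⟨fun h v => DFunLike.congr_fun h.eq (raagGen Γ v), fun h => ?_⟩
  refine MulEquiv.toMonoidHom_injective (PresentedGroup.ext fun v => ?_)
  exact h v

end RAAG

namespace IsPartialConj

variable {V : Type} {Γ : SimpleGraph V} {a b : V} {K L : Set V} {φ ψ : MulAut (RAAG Γ)}

lemma apply_of_mem (hφ : IsPartialConj Γ a K φ) {v : V} (hv : v ∈ K) :
    φ (raagGen Γ v) = (raagGen Γ a)⁻¹ * raagGen Γ v * raagGen Γ a :=
  hφ.2.1 v hv

lemma apply_of_notMem (hφ : IsPartialConj Γ a K φ) {v : V} (hv : v ∉ K) :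
    φ (raagGen Γ v) = raagGen Γ v :=
  hφ.2.2 v hv

lemma commute_of_notMem (hφ : IsPartialConj Γ a K φ) (hψ : IsPartialConj Γ b L ψ)
    (haL : a ∉ L) (hbK : b ∉ K)
    (hKL : (K ∩ L).Nonempty → Commute (raagGen Γ a) (raagGen Γ b)) : Commute φ ψ := by
  refine MulAut.commute_iff_forall_raagGen.2 fun v => ?_
  by_cases hvK : v ∈ K <;> by_cases hvL : v ∈ L
  · simp only [map_mul, map_inv, hφ.apply_of_mem hvK, hψ.apply_of_mem hvL,
      hφ.apply_of_notMem hbK, hψ.apply_of_notMem haL]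
    calc _ = (raagGen Γ a * raagGen Γ b)⁻¹ * raagGen Γ v * (raagGen Γ a * raagGen Γ b) := by
          group
      _ = (raagGen Γ b * raagGen Γ a)⁻¹ * raagGen Γ v * (raagGen Γ b * raagGen Γ a) := by
          rw [(hKL ⟨v, hvK, hvL⟩).eq]
      _ = _ := by group
  · simp only [map_mul, map_inv, hφ.apply_of_mem hvK, hψ.apply_of_notMem hvL,
      hψ.apply_of_notMem haL]
  · simp only [map_mul, map_inv, hφ.apply_of_notMem hvK, hψ.apply_of_mem hvL,
      hφ.apply_of_notMem hbK]
  · simp only [hφ.apply_of_notMem hvK, hψ.apply_of_notMem hvL]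

lemma commute_of_mem_of_subset (hφ : IsPartialConj Γ a K φ) (hψ : IsPartialConj Γ b L ψ)
    (haL : a ∈ L) (hKL : K ⊆ L) : Commute φ ψ := by
  have hbK : b ∉ K := fun hbK => hψ.1.self_notMem (hKL hbK)
  refine MulAut.commute_iff_forall_raagGen.2 fun v => ?_
  by_cases hvK : v ∈ K
  · simp only [map_mul, map_inv, hφ.apply_of_mem hvK, hψ.apply_of_mem (hKL hvK),
      hφ.apply_of_notMem hbK, hψ.apply_of_mem haL]
    group
  · by_cases hvL : v ∈ L
    · simp only [map_mul, map_inv, hφ.apply_of_notMem hvK, hψ.apply_of_mem hvL,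
        hφ.apply_of_notMem hbK]
    · simp only [hφ.apply_of_notMem hvK, hψ.apply_of_notMem hvL]

lemma subset_of_commute (hφ : IsPartialConj Γ a K φ) (hψ : IsPartialConj Γ b L ψ)
    (h : Commute φ ψ) (hab : ¬Γ.Adj a b) (haL : a ∈ L) : K ⊆ L := by
  intro v hvK
  by_contra hvL
  have heq := MulAut.commute_iff_forall_raagGen.1 h v
  simp only [map_mul, map_inv, hφ.apply_of_mem hvK, hψ.apply_of_notMem hvL,
    hψ.apply_of_mem haL] at heq
  -- `a⁻¹ v a = (b⁻¹ a b)⁻¹ v (b⁻¹ a b)`, false in `S₃` for `a ↦ (0 1)` and `b, v ↦ (1 2)`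
  obtain ⟨F, hFa, hFbv⟩ := exists_hom_of_forall_not_adj (Equiv.swap (0 : Fin 3) 1)
    (Equiv.swap 1 2) (S := {a}) (T := {b, v}) (Γ := Γ) <| by
      rintro _ rfl _ (rfl | rfl)
      exacts [hab, hφ.1.not_adj_of_mem hvK]
  have hba : b ≠ a := fun hba => hψ.1.self_notMem (hba ▸ haL)
  have hva : v ≠ a := fun hva => hφ.1.self_notMem (hva ▸ hvK)
  have hS₃ := congrArg F heq
  simp only [map_mul, map_inv, hFa a rfl, hFbv b (by simp) hba, hFbv v (by simp) hva] at hS₃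
  exact absurd hS₃ (by decide)

lemma disjoint_of_commute (hφ : IsPartialConj Γ a K φ) (hψ : IsPartialConj Γ b L ψ)
    (h : Commute φ ψ) (hne : a ≠ b) (hab : ¬Γ.Adj a b) (haL : a ∉ L) (hbK : b ∉ K) :
    Disjoint K L := by
  refine Set.disjoint_left.2 fun v hvK hvL => ?_
  have heq := MulAut.commute_iff_forall_raagGen.1 h v
  simp only [map_mul, map_inv, hφ.apply_of_mem hvK, hψ.apply_of_mem hvL,
    hφ.apply_of_notMem hbK, hψ.apply_of_notMem haL] at heq
  -- `b⁻¹ a⁻¹ v a b = a⁻¹ b⁻¹ v b a`, false in `S₃` for `a, v ↦ (0 1)` and `b ↦ (1 2)`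
  obtain ⟨F, hFav, hFb⟩ := exists_hom_of_forall_not_adj (Equiv.swap (0 : Fin 3) 1)
    (Equiv.swap 1 2) (S := {a, v}) (T := {b}) (Γ := Γ) <| by
      rintro _ (rfl | rfl) _ rfl
      exacts [hab, fun hvb => hψ.1.not_adj_of_mem hvL hvb.symm]
  have hvb : b ≠ v := fun hbv => hψ.1.self_notMem (hbv ▸ hvL)
  have hS₃ := congrArg F heq
  simp only [map_mul, map_inv, hFav a (by simp), hFav v (by simp),
    hFb b rfl (by simp [hne.symm, hvb])] at hS₃
  exact absurd hS₃ (by decide)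

end IsPartialConj

theorem pc_commute_iff_general {V : Type} (Γ : SimpleGraph V)
    (a b : V) (K L : Set V) (φ ψ : MulAut (RAAG Γ))
    (hφ : IsPartialConj Γ a K φ) (hψ : IsPartialConj Γ b L ψ) :
    Commute φ ψ ↔
      ((a = b ∨ Γ.Adj a b) ∨
       (a ≠ b ∧ ¬Γ.Adj a b ∧ (insert a K ⊂ L ∨ insert b L ⊂ K)) ∨
       (a ≠ b ∧ ¬Γ.Adj a b ∧ (insert a K) ∩ (insert b L) = ∅)) := by
  constructor
  · intro h
    by_cases hab : a = b ∨ Γ.Adj a b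
    · exact Or.inl hab
    obtain ⟨hne, hab⟩ := not_or.1 hab
    by_cases haL : a ∈ L
    · exact Or.inr <| Or.inl ⟨hne, hab, Or.inl <|
        hφ.1.insert_ssubset hψ.1 haL (hφ.subset_of_commute hψ h hab haL)⟩
    by_cases hbK : b ∈ K
    · exact Or.inr <| Or.inl ⟨hne, hab, Or.inr <|
        hψ.1.insert_ssubset hφ.1 hbK (hψ.subset_of_commute hφ h.symm (hab ·.symm) hbK)⟩
    refine Or.inr <| Or.inr ⟨hne, hab, Set.disjoint_iff_inter_eq_empty.1 ?_⟩
    exact Set.disjoint_insert_left.2 ⟨by simp [hne, haL], Set.disjoint_insert_right.2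
      ⟨hbK, hφ.disjoint_of_commute hψ h hne hab haL hbK⟩⟩
  · rintro ((rfl | hab) | ⟨-, -, hKL | hLK⟩ | ⟨-, -, h⟩)
    · exact hφ.commute_of_notMem hψ hψ.1.self_notMem hφ.1.self_notMem fun _ => Commute.refl _
    · exact hφ.commute_of_notMem hψ (hψ.1.not_adj_of_mem · hab.symm)
        (hφ.1.not_adj_of_mem · hab) fun _ => raagGen_commute hab
    · exact hφ.commute_of_mem_of_subset hψ (hKL.1 (Set.mem_insert _ _))
        ((Set.subset_insert _ _).trans hKL.1)
    · exact (hψ.commute_of_mem_of_subset hφ (hLK.1 (Set.mem_insert _ _))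
        ((Set.subset_insert _ _).trans hLK.1)).symm
    · obtain ⟨haL, hdisj⟩ := Set.disjoint_insert_left.1 (Set.disjoint_iff_inter_eq_empty.2 h)
      obtain ⟨hbK, hKL⟩ := Set.disjoint_insert_right.1 hdisj
      exact hφ.commute_of_notMem hψ (haL <| Set.mem_insert_of_mem _ ·) hbK
        fun hKL' => absurd hKL (Set.not_disjoint_iff_nonempty_inter.2 hKL')

/-- Lemma 3.2, commutation part. Two partial conjugations `π_{a,K}` and
`π_{b,L}` commute if and only if case (1), (4) or (5) holds. -/
theorem pc_commute_iff {V : Type} [Fintype V] (Γ : SimpleGraph V)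
    (hZ : (Zset Γ).Nonempty) (a b : V) (K L : Set V) (φ ψ : MulAut (RAAG Γ))
    (hφ : IsPartialConj Γ a K φ) (hψ : IsPartialConj Γ b L ψ) :
    Commute φ ψ ↔
      ((a = b ∨ Γ.Adj a b) ∨
       (a ≠ b ∧ ¬Γ.Adj a b ∧ (insert a K ⊂ L ∨ insert b L ⊂ K)) ∨
       (a ≠ b ∧ ¬Γ.Adj a b ∧ (insert a K) ∩ (insert b L) = ∅)) :=
  pc_commute_iff_general Γ a b K L φ ψ hφ hψ
end

section
/- Let Γ be a finite simplicial graph with vertex set V containing a SIL: distinct non-adjacent vertices a, b and a connected component M of Γ∖(lk(a) ∩ lk(b)) containing neither a nor b. Let K be the connected component of Γ∖st(a) containing b and let L be the connected component of Γ∖st(b) containing a. Then M is a connected component of both Γ∖st(a) and Γ∖st(b), and the set {π_{a,K}, π_{a,M}, π_{b,L}, π_{b,M}} of partial conjugations is a δ-p-set. -/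
open SimpleGraph

/-!
A component `M` of `Γ ∖ (lk a ∩ lk b)` that avoids `a` contains no neighbour of `a`, since such a
neighbour would pull `a` into `M`. Hence `M ⊆ Γ ∖ st(a) ⊆ Γ ∖ (lk a ∩ lk b)`, and a component of
a vertex set stays a component of any smaller vertex set containing it; symmetrically for `b`.
The δ-p-set partition is `{π_{a,K}, π_{a,M}} ∣ {π_{b,L}, π_{b,M}}`: the mixed pairs are admissible
because `a ∈ L` and `b ∈ K`, except `(π_{a,M}, π_{b,M})`, whose domains coincide.
-/

namespace IsCompOf

variable {V : Type} {Γ : SimpleGraph V} {S T K : Set V}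

theorem of_subset (hK : IsCompOf Γ S K) (hTS : T ⊆ S) (hKT : K ⊆ T) : IsCompOf Γ T K := by
  obtain ⟨c, rfl⟩ := hK
  obtain ⟨x, hx⟩ := c.nonempty_supp
  have hxT : x.1 ∈ T := hKT ⟨x, hx, rfl⟩
  -- `c` is connected as an induced graph, and that graph maps into `Γ.induce T`.
  let f : c.toSimpleGraph →g Γ.induce T := ⟨fun y => ⟨y.1.1, hKT ⟨y.1, y.2, rfl⟩⟩, id⟩
  refine ⟨(Γ.induce T).connectedComponentMk ⟨x, hxT⟩, Set.Subset.antisymm ?_ ?_⟩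
  · rintro _ ⟨y, hy, rfl⟩
    refine ⟨f ⟨y, hy⟩, ?_, rfl⟩
    exact ConnectedComponent.sound
      ((c.connected_toSimpleGraph.preconnected ⟨y, hy⟩ ⟨x, hx⟩).map f)
  · rintro _ ⟨z, hz, rfl⟩
    refine ⟨Set.inclusion hTS z, ?_, rfl⟩
    exact (ConnectedComponent.sound
      ((ConnectedComponent.exact hz).map (Γ.induceHomOfLE hTS).toHom)).trans hx

theorem mem_of_adj (hK : IsCompOf Γ S K) {u v : V} (hu : u ∈ K) (hv : v ∈ S) (huv : Γ.Adj u v) :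
    v ∈ K := by
  obtain ⟨c, rfl⟩ := hK
  obtain ⟨y, hy, rfl⟩ := hu
  exact ⟨⟨v, hv⟩, c.mem_supp_of_adj_mem_supp hy huv, rfl⟩

theorem compl_star {a : V} (hK : IsCompOf Γ S K) (haS : a ∈ S) (haK : a ∉ K)
    (hS : (Gstar Γ a)ᶜ ⊆ S) : IsCompOf Γ (Gstar Γ a)ᶜ K := by
  refine hK.of_subset hS fun v hvK hva => ?_
  rcases hva with rfl | hav
  · exact haK hvK
  · exact haK (hK.mem_of_adj hvK haS hav.symm)

end IsCompOf

theorem isCompOf_compl_star_of_isCompOf_compl_inter {V : Type} {Γ : SimpleGraph V} {a b : V}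
    {M : Set V} (hM : IsCompOf Γ (Γ.neighborSet a ∩ Γ.neighborSet b)ᶜ M) (haM : a ∉ M) :
    IsCompOf Γ (Gstar Γ a)ᶜ M :=
  hM.compl_star (fun h => Γ.irrefl h.1) haM
    (Set.compl_subset_compl.mpr (Set.inter_subset_left.trans (Set.subset_insert _ _)))

theorem ncard_fst_fiber_eq_zero_or_two {α β : Type*} {a b : α} (hab : a ≠ b) {K M L N : β}
    (hKM : K ≠ M) (hLN : L ≠ N) (v : α) :
    {p ∈ ({(a, K), (a, M), (b, L), (b, N)} : Set (α × β)) | p.1 = v}.ncard = 0 ∨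
      {p ∈ ({(a, K), (a, M), (b, L), (b, N)} : Set (α × β)) | p.1 = v}.ncard = 2 := by
  rcases eq_or_ne v a with rfl | hva
  · right
    convert Set.ncard_pair (a := (v, K)) (b := (v, M)) (by simp [hKM]) using 2
    ext ⟨w, X⟩
    aesop
  rcases eq_or_ne v b with rfl | hvb
  · right
    convert Set.ncard_pair (a := (v, L)) (b := (v, N)) (by simp [hLN]) using 2
    ext ⟨w, X⟩
    aesop
  · left
    convert Set.ncard_empty (α × β) using 2
    ext ⟨w, X⟩
    aesop

theorem isDeltaAdmissiblePartition_pairs {V : Type} {a b : V} (hab : a ≠ b) {K L M : Set V}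
    (hbK : b ∈ K) (haL : a ∈ L) :
    IsDeltaAdmissiblePartition {(a, K), (a, M)} {(b, L), (b, M)} := by
  refine ⟨?_, ⟨_, .inl rfl⟩, ⟨_, .inl rfl⟩, ?_⟩
  · rw [Set.disjoint_left]
    rintro p (rfl | rfl) (h | h) <;> exact hab (congrArg Prod.fst h)
  · rintro p (rfl | rfl) q (rfl | rfl)
    exacts [.inl haL, .inr (.inl hbK), .inl haL, .inr (.inr rfl)]

theorem sil_gives_delta_p_set_general {V : Type} (Γ : SimpleGraph V)
    (a b : V) (hab : a ≠ b)
    (M : Set V) (hM : IsCompOf Γ (Γ.neighborSet a ∩ Γ.neighborSet b)ᶜ M)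
    (haM : a ∉ M) (hbM : b ∉ M)
    (K : Set V) (hK : IsCompOf Γ (Gstar Γ a)ᶜ K) (hbK : b ∈ K)
    (L : Set V) (hL : IsCompOf Γ (Gstar Γ b)ᶜ L) (haL : a ∈ L) :
    IsCompOf Γ (Gstar Γ a)ᶜ M ∧ IsCompOf Γ (Gstar Γ b)ᶜ M ∧
      IsDeltaPSet Γ {(a, K), (a, M), (b, L), (b, M)} := by
  have hMa : IsCompOf Γ (Gstar Γ a)ᶜ M := isCompOf_compl_star_of_isCompOf_compl_inter hM haM
  have hMb : IsCompOf Γ (Gstar Γ b)ᶜ M :=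
    isCompOf_compl_star_of_isCompOf_compl_inter (Set.inter_comm _ _ ▸ hM) hbM
  have hKM : K ≠ M := fun h => hbM (h ▸ hbK)
  have hLM : L ≠ M := fun h => haM (h ▸ haL)
  refine ⟨hMa, hMb, ?_, fun v _ => ncard_fst_fiber_eq_zero_or_two hab hKM hLM v, ?_⟩
  · rintro p (rfl | rfl | rfl | rfl)
    exacts [hK, hMa, hL, hMb]
  · exact ⟨_, _, by rw [Set.insert_union, Set.singleton_union],
      isDeltaAdmissiblePartition_pairs hab hbK haL⟩

/-- from Proposition 5.7. A SIL `(a, b, M)`, together with the component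
`K` of `Γ∖st(a)` containing `b` and the component `L` of `Γ∖st(b)` containing `a`, yields
that `M` is a component of both `Γ∖st(a)` and `Γ∖st(b)`, and
`{π_{a,K}, π_{a,M}, π_{b,L}, π_{b,M}}` is a δ-p-set. -/
theorem sil_gives_delta_p_set {V : Type} [Fintype V] (Γ : SimpleGraph V)
    (a b : V) (hab : a ≠ b) (hadj : ¬Γ.Adj a b)
    (M : Set V) (hM : IsCompOf Γ (Γ.neighborSet a ∩ Γ.neighborSet b)ᶜ M)
    (haM : a ∉ M) (hbM : b ∉ M)
    (K : Set V) (hK : IsCompOf Γ (Gstar Γ a)ᶜ K) (hbK : b ∈ K)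
    (L : Set V) (hL : IsCompOf Γ (Gstar Γ b)ᶜ L) (haL : a ∈ L) :
    IsCompOf Γ (Gstar Γ a)ᶜ M ∧ IsCompOf Γ (Gstar Γ b)ᶜ M ∧
      IsDeltaPSet Γ {(a, K), (a, M), (b, L), (b, M)} :=
  sil_gives_delta_p_set_general Γ a b hab M hM haM hbM K hK hbK L hL haL
end
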